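/- Let p > 1, N ≥ 2 an integer, and k ∈ ℝ. Then for every θ ∈ (0, π/2), with f = cos, one has the identity E_{p,N,k}[cos](θ) = cos³(θ)·(α·tan²(θ) + β·k²), where α = (2p-3)·k² + (N-p)·k + 3 - N - p and β = (p-1)·k² + (N-p)·k + 1 - N. -/

import Mathlib

noncomputable section
open Real Set

/-- The differential expression `E_{p,N,k}[f](θ)` whose sign coincides with the sign of the
`p`-Laplacian of the quasiradial function `u(r,θ) = r^k · f(θ)` in the upper half-space. -/
def Ecal (p : ℝ) (N : ℕ) (k : ℝ) (f : ℝ → ℝ) (θ : ℝ) : ℝ :=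
  ((p - 1) * (deriv f θ) ^ 2 + k ^ 2 * (f θ) ^ 2) * deriv (deriv f) θ
    + k * ((2 * p - 3) * k + (N : ℝ) - p) * f θ * (deriv f θ) ^ 2
    + k ^ 3 * (k * (p - 1) + (N : ℝ) - p) * (f θ) ^ 3
    + ((N : ℝ) - 2) * ((deriv f θ) ^ 2 + k ^ 2 * (f θ) ^ 2) * deriv f θ * Real.cot θ

theorem Real.deriv_deriv_cos : deriv (deriv cos) = fun x => -cos x := by
  funext x
  rw [deriv_cos']
  exact (hasDerivAt_sin x).neg.deriv

theorem Ecal_cos_apply (p : ℝ) (N : ℕ) (k θ : ℝ) :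
    Ecal p N k cos θ =
      -((p - 1) * sin θ ^ 2 + k ^ 2 * cos θ ^ 2) * cos θ
        + k * ((2 * p - 3) * k + N - p) * cos θ * sin θ ^ 2
        + k ^ 3 * (k * (p - 1) + N - p) * cos θ ^ 3
        - (N - 2) * (sin θ ^ 2 + k ^ 2 * cos θ ^ 2) * sin θ * cot θ := by
  rw [Ecal, Real.deriv_deriv_cos, deriv_cos']
  ring

theorem Ecal_cos_eq_general (p : ℝ) (N : ℕ) (k : ℝ) :
    ∀ θ ∈ Ioo (0 : ℝ) (π / 2),
      Ecal p N k Real.cos θ =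
        (Real.cos θ) ^ 3 *
          (((2 * p - 3) * k ^ 2 + ((N : ℝ) - p) * k + 3 - (N : ℝ) - p) * (Real.tan θ) ^ 2
            + ((p - 1) * k ^ 2 + ((N : ℝ) - p) * k + 1 - (N : ℝ)) * k ^ 2) := by
  intro θ hθ
  have hsin : sin θ ≠ 0 := (sin_pos_of_pos_of_lt_pi hθ.1 (by linarith [hθ.2, pi_pos])).ne'
  have hcos : cos θ ≠ 0 := (cos_pos_of_mem_Ioo ⟨by linarith [hθ.1, pi_pos], hθ.2⟩).ne'
  rw [Ecal_cos_apply, cot_eq_cos_div_sin, tan_eq_sin_div_cos]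
  field_simp
  ring

/-- For `f = cos`, the expression `E_{p,N,k}[cos](θ)` factors as
`cos³θ · (α·tan²θ + β·k²)` with `α = (2p-3)k² + (N-p)k + 3 - N - p` and
`β = (p-1)k² + (N-p)k + 1 - N`. -/
theorem Ecal_cos_eq (p : ℝ) (hp : 1 < p) (N : ℕ) (hN : 2 ≤ N) (k : ℝ) :
    ∀ θ ∈ Ioo (0 : ℝ) (π / 2),
      Ecal p N k Real.cos θ =
        (Real.cos θ) ^ 3 *
          (((2 * p - 3) * k ^ 2 + ((N : ℝ) - p) * k + 3 - (N : ℝ) - p) * (Real.tan θ) ^ 2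
            + ((p - 1) * k ^ 2 + ((N : ℝ) - p) * k + 1 - (N : ℝ)) * k ^ 2) :=
  Ecal_cos_eq_general p N k
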